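/- Let a, b, c, α : (−∞, η) → ℝ be a maximal solution of the E(2) centrally flat ODE system a' = (a/2)(−a² + c²), b' = (b/2)(a² + c²), c' = (c/2)(a² − c² + 2α), α' = α·c², with a, b, c, α everywhere positive, satisfying 0 ≤ c(t)² − a(t)² ≤ 2α(t) for all t, and such that (a(t), b(t), c(t), α(t)) → (q, 0, q, 0) as t → −∞ for some q > 0. Then the function a·b is unbounded above on (−∞, η); moreover 2α(t) ≥ c(t)² − q² for all t ∈ (−∞, η). -/

import Mathlib

/-- The E(2) centrally flat ODE system on a set `J`: `a' = (a/2)(−a² + c²)`,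
`b' = (b/2)(a² + c²)`, `c' = (c/2)(a² − c² + 2α)`, `α' = α·c²`. -/
def E2CentrallyFlatSystem (a b c α : ℝ → ℝ) (J : Set ℝ) : Prop :=
  (∀ t ∈ J, HasDerivAt a (a t / 2 * (-(a t) ^ 2 + (c t) ^ 2)) t) ∧
  (∀ t ∈ J, HasDerivAt b (b t / 2 * ((a t) ^ 2 + (c t) ^ 2)) t) ∧
  (∀ t ∈ J, HasDerivAt c (c t / 2 * ((a t) ^ 2 - (c t) ^ 2 + 2 * α t)) t) ∧
  (∀ t ∈ J, HasDerivAt α (α t * (c t) ^ 2) t)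

/-- A solution of the E(2) centrally flat ODE system on an open interval `I` is maximal
if it does not extend to a solution of the same system on any open interval strictly
containing `I`. -/
def E2MaximalSolution (a b c α : ℝ → ℝ) (I : Set ℝ) : Prop :=
  E2CentrallyFlatSystem a b c α I ∧
  ∀ J : Set ℝ, IsOpen J → J.OrdConnected → I ⊆ J → I ≠ J →
    ¬ ∃ a' b' c' α' : ℝ → ℝ, E2CentrallyFlatSystem a' b' c' α' J ∧
      Set.EqOn a' a I ∧ Set.EqOn b' b I ∧ Set.EqOn c' c I ∧ Set.EqOn α' α I

/-!
Since `c² ≥ a²`, the quantity `2α - c²` is nondecreasing (its derivative is `c² (c² - a²)`) and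
tends to `-q²` at `-∞`, which gives the inequality. For the unboundedness, `α / (ab)` is constant,
so a bound `ab ≤ B` bounds `α`. Then `a` is nondecreasing with limit `q`, so `a ≥ q` and
`b ≤ B / q`; `a' = a (c² - a²) / 2 ≤ α a` with `α` bounded, so by Grönwall `a` stays bounded up
to `η`; and `c² ≤ a² + 2α` bounds `c`. But a bounded solution on `(-∞, η)` of an autonomous ODE with locally
Lipschitz right-hand side extends past `η`: Picard–Lindelöf gives a uniform existence time on a
compact ball, and local uniqueness glues the local solution to the given one. This contradicts
maximality.
-/

open Set Filter Topology Metric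
open scoped NNReal

section AutonomousODE

variable {E : Type*} [NormedAddCommGroup E] [NormedSpace ℝ E] {F : E → E}

theorem LocallyLipschitz.eventuallyEq_of_isIntegralCurveAt (hF : LocallyLipschitz F)
    {f g : ℝ → E} {t₀ : ℝ} (hf : IsIntegralCurveAt f (fun _ ↦ F) t₀)
    (hg : IsIntegralCurveAt g (fun _ ↦ F) t₀) (h : f t₀ = g t₀) : f =ᶠ[𝓝 t₀] g := by
  obtain ⟨K, U, hU, hK⟩ := hF (f t₀)
  have hfU : ∀ᶠ t in 𝓝 t₀, f t ∈ U := hf.continuousAt hU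
  have hgU : ∀ᶠ t in 𝓝 t₀, g t ∈ U := hg.continuousAt (h ▸ hU)
  exact ODE_solution_unique_of_eventually (v := fun _ ↦ F) (s := fun _ ↦ U)
    (.of_forall fun _ ↦ hK) (hf.and hfU) (hg.and hgU) h

theorem LocallyLipschitz.eqOn_of_hasDerivAt (hF : LocallyLipschitz F) {f g : ℝ → E}
    {s : Set ℝ} (hs : IsOpen s) (hs' : IsPreconnected s)
    (hf : ∀ t ∈ s, HasDerivAt f (F (f t)) t) (hg : ∀ t ∈ s, HasDerivAt g (F (g t)) t)
    {t₀ : ℝ} (ht₀ : t₀ ∈ s) (h : f t₀ = g t₀) : EqOn f g s := by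
  have hloc : ∀ t ∈ s, f t = g t → f =ᶠ[𝓝 t] g := fun t ht ↦
    hF.eventuallyEq_of_isIntegralCurveAt (eventually_of_mem (hs.mem_nhds ht) hf)
      (eventually_of_mem (hs.mem_nhds ht) hg)
  have hsub : s ⊆ {t | f =ᶠ[𝓝 t] g} := by
    refine hs'.subset_of_closure_inter_subset isOpen_setOfPred_eventually_nhds
      ⟨t₀, ht₀, hloc t₀ ht₀ h⟩ fun t ⟨htu, hts⟩ ↦ hloc t hts ?_
    -- `f` and `g` are continuous at `t` and agree on a set accumulating at `t`
    have := mem_closure_iff_nhdsWithin_neBot.1 htu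
    have hfg : f =ᶠ[𝓝[{t | f =ᶠ[𝓝 t] g}] t] g :=
      eventually_nhdsWithin_of_forall fun x hx ↦ hx.eq_of_nhds
    exact tendsto_nhds_unique (((hf t hts).continuousAt.mono_left nhdsWithin_le_nhds).congr' hfg)
      ((hg t hts).continuousAt.mono_left nhdsWithin_le_nhds)
  exact fun t ht ↦ (hsub ht).eq_of_nhds

theorem LocallyLipschitz.exists_pos_forall_exists_hasDerivAt [ProperSpace E]
    (hF : LocallyLipschitz F) (R : ℝ) :
    ∃ ε > 0, ∀ x₀ ∈ closedBall (0 : E) R, ∀ t₀ : ℝ, ∃ γ : ℝ → E, γ t₀ = x₀ ∧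
      ∀ t ∈ Ioo (t₀ - ε) (t₀ + ε), HasDerivAt γ (F (γ t)) t := by
  have hcpt := isCompact_closedBall (0 : E) (R + 1)
  obtain ⟨K, hK⟩ := hF.locallyLipschitzOn.exists_lipschitzOnWith_of_compact hcpt
  obtain ⟨M, hM⟩ := hcpt.exists_bound_of_continuousOn hF.continuous.continuousOn
  set L : ℝ≥0 := M.toNNReal
  set ε : ℝ := 1 / (L + 1)
  have hε : 0 < ε := by positivity
  refine ⟨ε, hε, fun x₀ hx₀ t₀ ↦ ?_⟩
  have hball : closedBall x₀ 1 ⊆ closedBall 0 (R + 1) :=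
    closedBall_subset_closedBall' (by rw [mem_closedBall] at hx₀; linarith)
  have hPL : IsPicardLindelof (fun _ ↦ F) (tmin := t₀ - ε) (tmax := t₀ + ε)
      ⟨t₀, by constructor <;> linarith⟩ x₀ 1 0 L K := by
    refine .of_time_independent (fun x hx ↦ (hM x (hball hx)).trans (M.le_coe_toNNReal))
      (hK.mono hball) ?_
    simp only [add_sub_cancel_left, sub_sub_cancel, max_self, NNReal.coe_one, NNReal.coe_zero,
      sub_zero, ε]
    rw [mul_one_div, div_le_one (by positivity)]
    linarith
  obtain ⟨γ, hγ₀, hγ⟩ := hPL.exists_eq_forall_mem_Icc_hasDerivWithinAt₀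
  exact ⟨γ, hγ₀, fun t ht ↦ (hγ t (Ioo_subset_Icc_self ht)).hasDerivAt (Icc_mem_nhds ht.1 ht.2)⟩

theorem forall_hasDerivAt_of_eqOn {γ γ' : ℝ → E} {s : Set ℝ} (hs : IsOpen s) (h : EqOn γ' γ s)
    (hγ : ∀ t ∈ s, HasDerivAt γ (F (γ t)) t) :
    ∀ t ∈ s, HasDerivAt γ' (F (γ' t)) t := fun t ht ↦ by
  rw [h ht]
  exact (hγ t ht).congr_of_eventuallyEq (h.eventuallyEq_of_mem (hs.mem_nhds ht))

theorem LocallyLipschitz.exists_hasDerivAt_Iio_extension [ProperSpace E]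
    (hF : LocallyLipschitz F) {γ : ℝ → E} {η R : ℝ}
    (hγ : ∀ t ∈ Iio η, HasDerivAt γ (F (γ t)) t) (hbdd : ∀ t ∈ Iio η, ‖γ t‖ ≤ R) :
    ∃ η' > η, ∃ γ' : ℝ → E, (∀ t ∈ Iio η', HasDerivAt γ' (F (γ' t)) t) ∧
      EqOn γ' γ (Iio η) := by
  obtain ⟨ε, hε, hloc⟩ := hF.exists_pos_forall_exists_hasDerivAt R
  set t₀ := η - ε / 2 with ht₀
  obtain ⟨δ, hδ₀, hδ⟩ := hloc (γ t₀) (mem_closedBall_zero_iff.2 (hbdd t₀ (by simp [t₀, hε]))) t₀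
  have hγδ : EqOn γ δ (Ioo (t₀ - ε) η) :=
    hF.eqOn_of_hasDerivAt isOpen_Ioo isPreconnected_Ioo (fun t ht ↦ hγ t ht.2)
      (fun t ht ↦ hδ t ⟨ht.1, by linarith [ht.2]⟩) ⟨by linarith, by linarith⟩ hδ₀.symm
  set γ' := fun t ↦ if t < η then γ t else δ t
  have hγ'γ : EqOn γ' γ (Iio η) := fun t ht ↦ if_pos ht
  have hγ'δ : EqOn γ' δ (Ioo (t₀ - ε) (t₀ + ε)) := fun t ht ↦ by
    by_cases htη : t < η
    · simp only [γ', if_pos htη, hγδ ⟨ht.1, htη⟩]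
    · exact if_neg htη
  refine ⟨t₀ + ε, by linarith, γ', fun t ht ↦ ?_, hγ'γ⟩
  by_cases htη : t < η
  · exact forall_hasDerivAt_of_eqOn isOpen_Iio hγ'γ hγ t htη
  · exact forall_hasDerivAt_of_eqOn isOpen_Ioo hγ'δ hδ t ⟨by linarith [not_lt.1 htη], ht⟩

end AutonomousODE

theorem hasDerivAt_prodMk_iff {𝕜 F G : Type*} [NontriviallyNormedField 𝕜]
    [NormedAddCommGroup F] [NormedSpace 𝕜 F] [NormedAddCommGroup G] [NormedSpace 𝕜 G]
    {f : 𝕜 → F} {g : 𝕜 → G} {f' : F} {g' : G} {t : 𝕜} :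
    HasDerivAt (fun t ↦ (f t, g t)) (f', g') t ↔ HasDerivAt f f' t ∧ HasDerivAt g g' t :=
  ⟨fun h ↦ ⟨(hasFDerivAt_fst.comp_hasDerivAt t h :), (hasFDerivAt_snd.comp_hasDerivAt t h :)⟩,
    fun h ↦ h.1.prodMk h.2⟩

theorem monotoneOn_Iio_of_hasDerivAt_nonneg {f f' : ℝ → ℝ} {η : ℝ}
    (hf : ∀ t ∈ Iio η, HasDerivAt f (f' t) t) (hf' : ∀ t ∈ Iio η, 0 ≤ f' t) :
    MonotoneOn f (Iio η) :=
  monotoneOn_of_hasDerivWithinAt_nonneg (convex_Iio η)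
    (fun t ht ↦ (hf t ht).continuousAt.continuousWithinAt)
    (by simpa using fun t ht ↦ (hf t ht).hasDerivWithinAt) (by simpa using hf')

theorem MonotoneOn.le_of_tendsto_atBot {α β : Type*} [TopologicalSpace α] [Preorder α]
    [OrderClosedTopology α] [LinearOrder β] {f : β → α} {η : β} {L : α}
    (hf : MonotoneOn f (Iio η)) (hlim : Tendsto f atBot (𝓝 L)) : ∀ t ∈ Iio η, L ≤ f t := by
  intro t ht
  have : Nonempty β := ⟨t⟩
  exact le_of_tendsto hlim (eventually_atBot.2 ⟨t, fun s hs ↦ hf (hs.trans_lt ht) ht hs⟩)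

noncomputable def e2Field (p : ℝ × ℝ × ℝ × ℝ) : ℝ × ℝ × ℝ × ℝ :=
  (p.1 / 2 * (-p.1 ^ 2 + p.2.2.1 ^ 2), p.2.1 / 2 * (p.1 ^ 2 + p.2.2.1 ^ 2),
    p.2.2.1 / 2 * (p.1 ^ 2 - p.2.2.1 ^ 2 + 2 * p.2.2.2), p.2.2.2 * p.2.2.1 ^ 2)

theorem contDiff_e2Field : ContDiff ℝ 1 e2Field := by
  unfold e2Field
  fun_prop

theorem e2CentrallyFlatSystem_iff {a b c α : ℝ → ℝ} {J : Set ℝ} :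
    E2CentrallyFlatSystem a b c α J ↔
      ∀ t ∈ J, HasDerivAt (fun t ↦ (a t, b t, c t, α t)) (e2Field (a t, b t, c t, α t)) t := by
  simp only [E2CentrallyFlatSystem, e2Field, hasDerivAt_prodMk_iff, imp_and, forall_and]

theorem E2MaximalSolution.not_exists_forall_norm_le {a b c α : ℝ → ℝ} {η : ℝ}
    (hmax : E2MaximalSolution a b c α (Iio η)) :
    ¬ ∃ R, ∀ t ∈ Iio η, ‖(a t, b t, c t, α t)‖ ≤ R := by
  rintro ⟨R, hR⟩
  obtain ⟨hsys, hext⟩ := hmax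
  obtain ⟨η', hη', Y, hY, hYX⟩ := contDiff_e2Field.locallyLipschitz.exists_hasDerivAt_Iio_extension
    (e2CentrallyFlatSystem_iff.1 hsys) hR
  exact hext (Iio η') isOpen_Iio ordConnected_Iio (Iio_subset_Iio hη'.le)
    (fun h ↦ hη'.ne (Iio_injective h)) ⟨fun t ↦ (Y t).1, fun t ↦ (Y t).2.1,
      fun t ↦ (Y t).2.2.1, fun t ↦ (Y t).2.2.2, e2CentrallyFlatSystem_iff.2 hY,
      fun t ht ↦ congrArg Prod.fst (hYX ht), fun t ht ↦ congrArg (·.2.1) (hYX ht),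
      fun t ht ↦ congrArg (·.2.2.1) (hYX ht), fun t ht ↦ congrArg (·.2.2.2) (hYX ht)⟩

namespace E2CentrallyFlatSystem

variable {a b c α : ℝ → ℝ} {η : ℝ}

theorem sq_sub_sq_le_two_mul (hsys : E2CentrallyFlatSystem a b c α (Iio η))
    (hac : ∀ t ∈ Iio η, a t ^ 2 ≤ c t ^ 2) {q : ℝ} (hc : Tendsto c atBot (𝓝 q))
    (hα : Tendsto α atBot (𝓝 0)) : ∀ t ∈ Iio η, c t ^ 2 - q ^ 2 ≤ 2 * α t := by
  obtain ⟨-, -, hdc, hdα⟩ := hsys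
  have hmono : MonotoneOn (fun t ↦ 2 * α t - c t ^ 2) (Iio η) := by
    refine monotoneOn_Iio_of_hasDerivAt_nonneg (f' := fun t ↦ c t ^ 2 * (c t ^ 2 - a t ^ 2))
      (fun t ht ↦ (((hdα t ht).const_mul 2).sub ((hdc t ht).pow 2)).congr_deriv (by ring))
      fun t ht ↦ mul_nonneg (sq_nonneg _) (sub_nonneg.2 (hac t ht))
  have hlim : Tendsto (fun t ↦ 2 * α t - c t ^ 2) atBot (𝓝 (-q ^ 2)) := by
    simpa using (hα.const_mul 2).sub (hc.pow 2)
  intro t ht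
  linarith [hmono.le_of_tendsto_atBot hlim t ht]

theorem monotoneOn_a (hsys : E2CentrallyFlatSystem a b c α (Iio η))
    (ha : ∀ t ∈ Iio η, 0 < a t) (hac : ∀ t ∈ Iio η, a t ^ 2 ≤ c t ^ 2) :
    MonotoneOn a (Iio η) :=
  monotoneOn_Iio_of_hasDerivAt_nonneg hsys.1
    fun t ht ↦ mul_nonneg (half_pos (ha t ht)).le (by linarith [hac t ht])

theorem exists_eq_mul_mul (hsys : E2CentrallyFlatSystem a b c α (Iio η))
    (hab : ∀ t ∈ Iio η, a t * b t ≠ 0) : ∃ k, ∀ t ∈ Iio η, α t = k * (a t * b t) := by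
  obtain ⟨hda, hdb, -, hdα⟩ := hsys
  have hderiv : ∀ t ∈ Iio η, HasDerivAt (fun t ↦ α t / (a t * b t)) 0 t := fun t ht ↦ by
    have hdab : HasDerivAt (fun t ↦ a t * b t) (a t * b t * c t ^ 2) t :=
      ((hda t ht).mul (hdb t ht)).congr_deriv (by ring)
    exact ((hdα t ht).div hdab (hab t ht)).congr_deriv (by ring)
  obtain ⟨k, hk⟩ := isOpen_Iio.exists_is_const_of_deriv_eq_zero isPreconnected_Iio
    (fun t ht ↦ (hderiv t ht).differentiableAt.differentiableWithinAt)
    (fun t ht ↦ (hderiv t ht).deriv)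
  exact ⟨k, fun t ht ↦ by rw [← hk t ht, div_mul_cancel₀ _ (hab t ht)]⟩

theorem a_le_mul_exp (hsys : E2CentrallyFlatSystem a b c α (Iio η))
    (ha : ∀ t ∈ Iio η, 0 < a t) (hcα : ∀ t ∈ Iio η, c t ^ 2 - a t ^ 2 ≤ 2 * α t) {A : ℝ}
    (hαA : ∀ t ∈ Iio η, α t ≤ A) {s t : ℝ} (hst : s ≤ t) (ht : t < η) :
    a t ≤ a s * Real.exp (A * (t - s)) := by
  have hsub : Icc s t ⊆ Iio η := fun u hu ↦ hu.2.trans_lt ht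
  have hgron := le_gronwallBound_of_liminf_deriv_right_le (f := a) (K := A) (ε := 0)
    (fun u hu ↦ (hsys.1 u (hsub hu)).continuousAt.continuousWithinAt)
    (fun u hu _ hr ↦
      (hsys.1 u (hsub (Ico_subset_Icc_self hu))).hasDerivWithinAt.liminf_right_slope_le hr)
    le_rfl (fun u hu ↦ ?_) t ⟨hst, le_rfl⟩
  · rwa [gronwallBound_ε0] at hgron
  · have hu' := hsub (Ico_subset_Icc_self hu)
    nlinarith [ha u hu', hcα u hu', hαA u hu']

theorem exists_forall_a_le (hsys : E2CentrallyFlatSystem a b c α (Iio η))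
    (ha : ∀ t ∈ Iio η, 0 < a t) (hac : ∀ t ∈ Iio η, a t ^ 2 ≤ c t ^ 2)
    (hcα : ∀ t ∈ Iio η, c t ^ 2 - a t ^ 2 ≤ 2 * α t) {A : ℝ} (hαA : ∀ t ∈ Iio η, α t ≤ A) :
    ∃ M, ∀ t ∈ Iio η, a t ≤ M := by
  have ht₁ : η - 1 ∈ Iio η := by simp
  refine ⟨a (η - 1) * Real.exp |A|, fun t ht ↦ ?_⟩
  rcases le_total t (η - 1) with h | h
  · calc a t ≤ a (η - 1) := hsys.monotoneOn_a ha hac ht ht₁ h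
      _ ≤ a (η - 1) * Real.exp |A| :=
        le_mul_of_one_le_right (ha _ ht₁).le (Real.one_le_exp (abs_nonneg A))
  · calc a t ≤ a (η - 1) * Real.exp (A * (t - (η - 1))) := hsys.a_le_mul_exp ha hcα hαA h ht
      _ ≤ a (η - 1) * Real.exp |A| := by
        refine mul_le_mul_of_nonneg_left (Real.exp_le_exp.2 ?_) (ha _ ht₁).le
        have : t - (η - 1) ≤ 1 := by linarith [mem_Iio.1 ht]
        nlinarith [le_abs_self A, abs_nonneg A]

theorem exists_norm_le_of_bddAbove_mul (hsys : E2CentrallyFlatSystem a b c α (Iio η))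
    (ha : ∀ t ∈ Iio η, 0 < a t) (hb : ∀ t ∈ Iio η, 0 < b t) (hα : ∀ t ∈ Iio η, 0 < α t)
    (hac : ∀ t ∈ Iio η, a t ^ 2 ≤ c t ^ 2) (hcα : ∀ t ∈ Iio η, c t ^ 2 - a t ^ 2 ≤ 2 * α t)
    {q : ℝ} (hq : 0 < q) (hlima : Tendsto a atBot (𝓝 q))
    (hbdd : BddAbove ((fun t ↦ a t * b t) '' Iio η)) :
    ∃ R, ∀ t ∈ Iio η, ‖(a t, b t, c t, α t)‖ ≤ R := by
  obtain ⟨B, hB⟩ := hbdd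
  have hab : ∀ t ∈ Iio η, 0 < a t * b t := fun t ht ↦ mul_pos (ha t ht) (hb t ht)
  have habB : ∀ t ∈ Iio η, a t * b t ≤ B := fun t ht ↦ hB (mem_image_of_mem _ ht)
  obtain ⟨k, hk⟩ := hsys.exists_eq_mul_mul fun t ht ↦ (hab t ht).ne'
  have ht₁ : η - 1 ∈ Iio η := by simp
  have hk₀ : 0 < k := pos_of_mul_pos_left (hk _ ht₁ ▸ hα _ ht₁) (hab _ ht₁).le
  have hαB : ∀ t ∈ Iio η, α t ≤ k * B := fun t ht ↦
    hk t ht ▸ mul_le_mul_of_nonneg_left (habB t ht) hk₀.le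
  have hqa : ∀ t ∈ Iio η, q ≤ a t := (hsys.monotoneOn_a ha hac).le_of_tendsto_atBot hlima
  obtain ⟨M, hM⟩ := hsys.exists_forall_a_le ha hac hcα hαB
  have hB₀ : 0 < B := (hab _ ht₁).trans_le (habB _ ht₁)
  have hM₀ : 0 < M := (ha _ ht₁).trans_le (hM _ ht₁)
  refine ⟨M + B / q + 2 * k * B + 1, fun t ht ↦ ?_⟩
  have hbq : b t ≤ B / q := by
    rw [le_div_iff₀ hq]
    nlinarith [habB t ht, hqa t ht, hb t ht]
  have hc : |c t| ≤ M + 2 * k * B + 1 := by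
    refine abs_le_of_sq_le_sq ?_ (by positivity)
    nlinarith [hcα t ht, hαB t ht, pow_le_pow_left₀ (ha t ht).le (hM t ht) 2,
      mul_pos hM₀ (mul_pos hk₀ hB₀)]
  simp only [norm_prod_le_iff, Real.norm_eq_abs, abs_of_pos (ha t ht), abs_of_pos (hb t ht),
    abs_of_pos (hα t ht)]
  refine ⟨?_, ?_, ?_, ?_⟩ <;> nlinarith [hM t ht, hαB t ht, div_pos hB₀ hq]

end E2CentrallyFlatSystem

theorem e2_unstable_curve_ab_unbounded_general
    (η q : ℝ) (hq : 0 < q)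
    (a b c α : ℝ → ℝ)
    (hmax : E2MaximalSolution a b c α (Set.Iio η))
    (hapos : ∀ t ∈ Set.Iio η, 0 < a t) (hbpos : ∀ t ∈ Set.Iio η, 0 < b t)
    (hαpos : ∀ t ∈ Set.Iio η, 0 < α t)
    (hineq : ∀ t ∈ Set.Iio η,
      0 ≤ (c t) ^ 2 - (a t) ^ 2 ∧ (c t) ^ 2 - (a t) ^ 2 ≤ 2 * α t)
    (hlima : Filter.Tendsto a Filter.atBot (nhds q))
    (hlimc : Filter.Tendsto c Filter.atBot (nhds q))
    (hlimα : Filter.Tendsto α Filter.atBot (nhds 0)) :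
    ¬ BddAbove ((fun t => a t * b t) '' Set.Iio η) ∧
    ∀ t ∈ Set.Iio η, (c t) ^ 2 - q ^ 2 ≤ 2 * α t := by
  have hac : ∀ t ∈ Iio η, a t ^ 2 ≤ c t ^ 2 := fun t ht ↦ sub_nonneg.1 (hineq t ht).1
  refine ⟨fun hbdd ↦ hmax.not_exists_forall_norm_le ?_,
    hmax.1.sq_sub_sq_le_two_mul hac hlimc hlimα⟩
  exact hmax.1.exists_norm_le_of_bddAbove_mul hapos hbpos hαpos hac (fun t ht ↦ (hineq t ht).2)
    hq hlima hbdd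

/-- For a maximal positive solution of the E(2) centrally flat system on
`(−∞, η)` satisfying `0 ≤ c² − a² ≤ 2α` throughout and converging to `(q, 0, q, 0)`
with `q > 0` as `t → −∞`, the product `a·b` is unbounded above on `(−∞, η)`, and
`2α(t) ≥ c(t)² − q²` for all `t < η`. -/
theorem e2_unstable_curve_ab_unbounded
    (η q : ℝ) (hq : 0 < q)
    (a b c α : ℝ → ℝ)
    (hmax : E2MaximalSolution a b c α (Set.Iio η))
    (hapos : ∀ t ∈ Set.Iio η, 0 < a t) (hbpos : ∀ t ∈ Set.Iio η, 0 < b t)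
    (hcpos : ∀ t ∈ Set.Iio η, 0 < c t) (hαpos : ∀ t ∈ Set.Iio η, 0 < α t)
    (hineq : ∀ t ∈ Set.Iio η,
      0 ≤ (c t) ^ 2 - (a t) ^ 2 ∧ (c t) ^ 2 - (a t) ^ 2 ≤ 2 * α t)
    (hlima : Filter.Tendsto a Filter.atBot (nhds q))
    (hlimb : Filter.Tendsto b Filter.atBot (nhds 0))
    (hlimc : Filter.Tendsto c Filter.atBot (nhds q))
    (hlimα : Filter.Tendsto α Filter.atBot (nhds 0)) :
    ¬ BddAbove ((fun t => a t * b t) '' Set.Iio η) ∧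
    ∀ t ∈ Set.Iio η, (c t) ^ 2 - q ^ 2 ≤ 2 * α t :=
  e2_unstable_curve_ab_unbounded_general η q hq a b c α hmax hapos hbpos hαpos hineq hlima hlimc
    hlimα
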